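/- arXiv:1605.07541 — 4 statements merged into one kernel-verified Lean document; each statement's English description precedes it below -/
import Mathlib

section
/- For every non-signalling learning protocol P there exists, for each a ∈ A, a probability distribution T(·|a) on the (finite) set of functions f : X → Y such that the protocol P̃ defined by P̃(y₁,…,yₙ | a, x₁,…,xₙ) = Σ_f T(f|a) · Πᵢ δ_{yᵢ, f(xᵢ)} satisfies E[P̃|a] = E[P|a] for every a ∈ A. -/
/-!
The risk sees a protocol only through its single-site marginals `Pᵢ(· | a, xᵢ)`, and, since
the loss is averaged over the sites and the test pairs are i.i.d., only through their average
over `i`. Non-signalling makes each marginal a stochastic map `Qᵢ(· | a, ξ)` from `X` to `Y`,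
so their average `M(· | a, ξ)` is one too. Under the product distribution
`T(f | a) = ∏_ξ M(f ξ | a, ξ)` on functions `X → Y` the value `f ξ` has law `M(· | a, ξ)`, so
every site marginal of the resulting protocol is `M`, and the two risks agree.
-/

/-- The conditional expected risk `E[P|a]` of a protocol `P` given training value `a`,
for test-instance/label distribution `p` on `X × Y`. -/
noncomputable def condRisk {A X Y : Type*} [Fintype X] [Fintype Y] [DecidableEq Y]
    (n : ℕ) (p : X × Y → ℝ)
    (P : A → (Fin n → X) → (Fin n → Y) → ℝ) (a : A) : ℝ :=
  ∑ x : Fin n → X, ∑ y : Fin n → Y, ∑ y' : Fin n → Y,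
    ((1 / (n : ℝ)) * ∑ i, (if y i = y' i then (0 : ℝ) else 1)) * P a x y
      * ∏ i, p (x i, y' i)

/-- A protocol is non-signalling if each single-site marginal
`Pᵢ(yᵢ | a, x₁..xₙ)` depends only on `a` and `xᵢ`. -/
def NonSignalling {A X Y : Type*} [Fintype Y] [DecidableEq Y]
    (n : ℕ) (P : A → (Fin n → X) → (Fin n → Y) → ℝ) : Prop :=
  ∀ (i : Fin n) (a : A) (x x' : Fin n → X), x i = x' i →
    ∀ yi : Y,
      (∑ y : Fin n → Y, if y i = yi then P a x y else 0)
        = ∑ y : Fin n → Y, if y i = yi then P a x' y else 0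

open Finset

section ProductDistribution

variable {ι W : Type*} [Fintype ι] [DecidableEq ι] [Fintype W]

theorem sum_eval_mul_prod_of_sum_eq_one (i : ι) (g : W → ℝ) (q : ι → W → ℝ)
    (hq : ∀ j ≠ i, ∑ w, q j w = 1) :
    ∑ z : ι → W, g (z i) * ∏ j, q j (z j) = ∑ w, g w * q i w := by
  set r := Function.update q i fun w => g w * q i w
  have hri : r i = fun w => g w * q i w := Function.update_self ..
  have hrj : ∀ j ∈ ({i}ᶜ : Finset ι), r j = q j := fun j hj =>
    Function.update_of_ne (by simpa using hj) ..
  have hr : ∀ z : ι → W, ∏ j, r j (z j) = g (z i) * ∏ j, q j (z j) := fun z => by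
    rw [Fintype.prod_eq_mul_prod_compl i, Fintype.prod_eq_mul_prod_compl i, hri,
      prod_congr rfl fun j hj => congrFun (hrj j hj) (z j), mul_assoc]
  calc ∑ z : ι → W, g (z i) * ∏ j, q j (z j)
      = ∏ j, ∑ w, r j w := by simp only [← hr, Fintype.prod_sum]
    _ = ∑ w, g w * q i w := by
      rw [Fintype.prod_eq_mul_prod_compl i, hri,
        prod_eq_one fun j hj => by rw [hrj j hj, hq j (by simpa using hj)], mul_one]

theorem sum_sum_eval_mul_prod_of_sum_eq_one {X Y : Type*} [Fintype X] [Fintype Y]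
    (p : X × Y → ℝ) (hp : ∑ z, p z = 1) (i : ι) (G : X → Y → ℝ) :
    ∑ x : ι → X, ∑ y : ι → Y, G (x i) (y i) * ∏ j, p (x j, y j)
      = ∑ ξ, ∑ η, G ξ η * p (ξ, η) := by
  rw [← Fintype.sum_prod_type', ← Fintype.sum_prod_type',
    ← (Equiv.arrowProdEquivProdArrow ι (fun _ => X) (fun _ => Y)).sum_comp]
  exact sum_eval_mul_prod_of_sum_eq_one i (fun z => G z.1 z.2) (fun _ => p) fun _ _ => hp

end ProductDistribution

section Marginal

variable {ι W : Type*} [Fintype ι] [DecidableEq ι] [Fintype W] [DecidableEq W]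

def marginal (μ : (ι → W) → ℝ) (i : ι) (w : W) : ℝ :=
  ∑ z, if z i = w then μ z else 0

theorem sum_eval_mul_eq_sum_mul_marginal (μ : (ι → W) → ℝ) (i : ι) (g : W → ℝ) :
    ∑ z, g (z i) * μ z = ∑ w, g w * marginal μ i w := by
  simp only [marginal, mul_sum, mul_ite, mul_zero]
  rw [sum_comm]
  simp

theorem marginal_nonneg {μ : (ι → W) → ℝ} (hμ : ∀ z, 0 ≤ μ z) (i : ι) (w : W) :
    0 ≤ marginal μ i w :=
  sum_nonneg fun z _ => by split_ifs <;> simp [hμ z]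

theorem sum_marginal (μ : (ι → W) → ℝ) (i : ι) : ∑ w, marginal μ i w = ∑ z, μ z := by
  simpa using (sum_eval_mul_eq_sum_mul_marginal μ i fun _ => 1).symm

theorem marginal_prod {q : ι → W → ℝ} (hq : ∀ j, ∑ w, q j w = 1) (i : ι) :
    marginal (fun z => ∏ j, q j (z j)) i = q i := by
  ext w
  have := sum_eval_mul_prod_of_sum_eq_one i (fun v => if v = w then (1 : ℝ) else 0) q
    fun j _ => hq j
  simpa [marginal, ite_mul] using this

theorem marginal_mixture {X : Type*} [Fintype X] [DecidableEq X] (T : (X → W) → ℝ)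
    (x : ι → X) (i : ι) :
    marginal (fun y => ∑ f : X → W, T f * ∏ j, if y j = f (x j) then (1 : ℝ) else 0) i
      = marginal T (x i) := by
  ext w
  simp only [marginal, Fintype.prod_boole, ← funext_iff, mul_boole, ite_sum_zero]
  rw [sum_comm]
  refine sum_congr rfl fun f _ => ?_
  rw [Fintype.sum_eq_single (fun j => f (x j)) fun y hy => by simp [hy]]
  simp

end Marginal

section Risk

variable {X Y : Type*} [Fintype X] [Fintype Y] [DecidableEq Y]

def classifierRisk (p : X × Y → ℝ) (m : X → Y → ℝ) : ℝ :=
  ∑ ξ, ∑ η, ∑ η', (if η = η' then (0 : ℝ) else 1) * m ξ η * p (ξ, η')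

theorem classifierRisk_mul_sum {κ : Type*} [Fintype κ] (p : X × Y → ℝ) (c : ℝ)
    (m : κ → X → Y → ℝ) :
    classifierRisk p (fun ξ η => c * ∑ k, m k ξ η) = c * ∑ k, classifierRisk p (m k) := by
  simp only [classifierRisk, mul_sum, sum_mul]
  simp_rw [sum_comm (t := (univ : Finset κ))]
  exact sum_congr rfl fun k _ => sum_congr rfl fun ξ _ => sum_congr rfl fun η _ =>
    sum_congr rfl fun η' _ => by ring

theorem condRisk_eq_mean_over_sites {A : Type*} (n : ℕ) (p : X × Y → ℝ)
    (P : A → (Fin n → X) → (Fin n → Y) → ℝ) (a : A) :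
    condRisk n p P a = 1 / n * ∑ i, ∑ x : Fin n → X, ∑ y' : Fin n → Y,
      (∑ y : Fin n → Y, (if y i = y' i then (0 : ℝ) else 1) * P a x y) * ∏ j, p (x j, y' j) := by
  unfold condRisk
  simp_rw [mul_sum, sum_mul, sum_comm (t := (univ : Finset (Fin n)))]
  refine sum_congr rfl fun i _ => sum_congr rfl fun x _ => ?_
  simp only [mul_sum]
  rw [sum_comm]
  exact sum_congr rfl fun y' _ => sum_congr rfl fun y _ => by ring

theorem condRisk_eq_of_marginal {A : Type*} {n : ℕ} {p : X × Y → ℝ} (hp : ∑ z, p z = 1)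
    {P : A → (Fin n → X) → (Fin n → Y) → ℝ} {a : A} {m : Fin n → X → Y → ℝ}
    (hm : ∀ i x, marginal (P a x) i = m i (x i)) :
    condRisk n p P a = 1 / n * ∑ i, classifierRisk p (m i) := by
  rw [condRisk_eq_mean_over_sites]
  congr 1
  refine sum_congr rfl fun i _ => ?_
  have hsite : ∀ x (η' : Y), ∑ y, (if y i = η' then (0 : ℝ) else 1) * P a x y
      = ∑ η, (if η = η' then (0 : ℝ) else 1) * m i (x i) η := fun x η' => by
    rw [← hm]
    exact sum_eval_mul_eq_sum_mul_marginal (P a x) i fun η => if η = η' then 0 else 1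
  simp only [hsite]
  rw [sum_sum_eval_mul_prod_of_sum_eq_one p hp i
    fun ξ η' => ∑ η, (if η = η' then (0 : ℝ) else 1) * m i ξ η]
  simp only [classifierRisk, sum_mul]
  exact sum_congr rfl fun ξ _ => sum_comm

end Risk

theorem inductive_learning_splits_general
    {A X Y : Type*} [Fintype X] [Fintype Y]
    [DecidableEq X] [DecidableEq Y]
    (n : ℕ) (hn : 1 ≤ n)
    (p : X × Y → ℝ) (hp1 : ∑ z : X × Y, p z = 1)
    (P : A → (Fin n → X) → (Fin n → Y) → ℝ)
    (hP0 : ∀ a x y, 0 ≤ P a x y) (hP1 : ∀ a x, ∑ y : Fin n → Y, P a x y = 1)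
    (hNS : NonSignalling n P) :
    ∃ T : A → (X → Y) → ℝ,
      (∀ a f, 0 ≤ T a f) ∧ (∀ a, ∑ f : X → Y, T a f = 1) ∧
      ∀ a, condRisk n p
            (fun a x y => ∑ f : X → Y, T a f * ∏ i, (if y i = f (x i) then (1 : ℝ) else 0)) a
          = condRisk n p P a := by
  have hn₀ : (n : ℝ) ≠ 0 := Nat.cast_ne_zero.mpr (Nat.one_le_iff_ne_zero.mp hn)
  set Q : Fin n → A → X → Y → ℝ := fun i a ξ => marginal (P a fun _ => ξ) i
  set M : A → X → Y → ℝ := fun a ξ η => 1 / n * ∑ i, Q i a ξ η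
  have hM0 : ∀ a ξ η, 0 ≤ M a ξ η := fun a ξ η =>
    mul_nonneg (by positivity) (sum_nonneg fun i _ => marginal_nonneg (hP0 a _) i η)
  have hM1 : ∀ a ξ, ∑ η, M a ξ η = 1 := fun a ξ => by
    simp [M, Q, ← mul_sum, sum_comm (s := (univ : Finset Y)), sum_marginal, hP1, hn₀]
  refine ⟨fun a f => ∏ ξ, M a ξ (f ξ), fun a f => prod_nonneg fun ξ _ => hM0 a ξ (f ξ),
    fun a => ?_, fun a => ?_⟩
  · rw [← Fintype.prod_sum]
    exact prod_eq_one fun ξ _ => hM1 a ξ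
  · have hP : ∀ i x, marginal (P a x) i = Q i a (x i) := fun i x => funext (hNS i a x _ rfl)
    rw [condRisk_eq_of_marginal hp1 fun i x => by rw [marginal_mixture, marginal_prod (hM1 a)],
      condRisk_eq_of_marginal hp1 hP, sum_const, card_univ, Fintype.card_fin, nsmul_eq_mul,
      classifierRisk_mul_sum]
    field_simp

theorem inductive_learning_splits
    {A X Y : Type*} [Fintype A] [Fintype X] [Fintype Y]
    [Nonempty A] [Nonempty X] [Nonempty Y] [DecidableEq X] [DecidableEq Y]
    (n : ℕ) (hn : 1 ≤ n)
    (p : X × Y → ℝ) (hp0 : ∀ z, 0 ≤ p z) (hp1 : ∑ z : X × Y, p z = 1)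
    (P : A → (Fin n → X) → (Fin n → Y) → ℝ)
    (hP0 : ∀ a x y, 0 ≤ P a x y) (hP1 : ∀ a x, ∑ y : Fin n → Y, P a x y = 1)
    (hNS : NonSignalling n P) :
    ∃ T : A → (X → Y) → ℝ,
      (∀ a f, 0 ≤ T a f) ∧ (∀ a, ∑ f : X → Y, T a f = 1) ∧
      ∀ a, condRisk n p
            (fun a x y => ∑ f : X → Y, T a f * ∏ i, (if y i = f (x i) then (1 : ℝ) else 0)) a
          = condRisk n p P a :=
  inductive_learning_splits_general n hn p hp1 P hP0 hP1 hNS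
end

section
/- Let Q be a linear, completely positive, trace-preserving map from matrices on ℂ^{d_A} ⊗ (ℂ^{d_X})^{⊗n} to matrices on (ℂ^{d_Y})^{⊗n} that is non-signalling, i.e., for every k ∈ {0,…,n} there exists a linear map Q_k from matrices on ℂ^{d_A} ⊗ (ℂ^{d_X})^{⊗k} to matrices on (ℂ^{d_Y})^{⊗k} with tr_{Y_{k+1},…,Y_n}[Q(ρ)] = Q_k(tr_{X_{k+1},…,X_n}[ρ]) for all inputs ρ. Let ω = (id ⊗ Q)(|Ω⟩⟨Ω|) be the Choi matrix of Q, where |Ω⟩ = (d_A d_X^n)^{-1/2} Σ_i |i⟩|i⟩ is the maximally entangled vector between two copies of ℂ^{d_A} ⊗ (ℂ^{d_X})^{⊗n}, so that ω is a density matrix on ℂ^{d_A} ⊗ (ℂ^{d_X})^{⊗n} ⊗ (ℂ^{d_Y})^{⊗n}. Then for every k ≤ n: tr_{Y_{k+1},…,Y_n}[ω] = ω_k ⊗ I_{X_{k+1},…,X_n} / d_X^{n−k}, where ω_k = tr_{X_{k+1},…,X_n, Y_{k+1},…,Y_n}[ω]; moreover ω_k is the Choi matrix of the induced channel Q_k.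 -/
open scoped ComplexOrder

/-- Glue a configuration on the first `k` sites with one on the remaining `n - k` sites. -/
def glue {α : Type*} {k n : ℕ} (hk : k ≤ n) (v : Fin k → α) (u : Fin (n - k) → α) :
    Fin n → α :=
  fun i => Fin.append v u (Fin.cast (by omega) i)

/-- A linear map between matrix algebras is completely positive if all its ancillary
extensions `id_m ⊗ Q` preserve positive semidefiniteness. -/
def IsCompletelyPositive {I K : Type*} [Fintype I] [Fintype K]
    (Q : Matrix I I ℂ →ₗ[ℂ] Matrix K K ℂ) : Prop :=
  ∀ (m : ℕ) (ρ : Matrix (Fin m × I) (Fin m × I) ℂ), ρ.PosSemidef →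
    (Matrix.of fun (p q : Fin m × K) =>
      Q (Matrix.of fun i i' => ρ (p.1, i) (q.1, i')) p.2 q.2).PosSemidef

/-- Trace-preserving linear map between matrix algebras. -/
def IsTracePreserving {I K : Type*} [Fintype I] [Fintype K]
    (Q : Matrix I I ℂ →ₗ[ℂ] Matrix K K ℂ) : Prop :=
  ∀ ρ : Matrix I I ℂ, (Q ρ).trace = ρ.trace

/-- The Choi matrix `(id ⊗ Q)(|Ω⟩⟨Ω|)` of a linear map `Q`, where
`|Ω⟩ = (dim I)^{-1/2} Σ_i |i⟩|i⟩`. -/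
noncomputable def choi {I K : Type*} [Fintype I] [DecidableEq I] [Fintype K]
    (Q : Matrix I I ℂ →ₗ[ℂ] Matrix K K ℂ) : Matrix (I × K) (I × K) ℂ :=
  Matrix.of fun p q =>
    (Fintype.card I : ℂ)⁻¹ * Q (Matrix.single p.1 q.1 1) p.2 q.2

/-- Partial trace over the last `n - k` output (`Y`) factors. -/
noncomputable def trYlast {dY k n : ℕ} (hk : k ≤ n)
    (M : Matrix (Fin n → Fin dY) (Fin n → Fin dY) ℂ) :
    Matrix (Fin k → Fin dY) (Fin k → Fin dY) ℂ :=
  Matrix.of fun w w' => ∑ u : Fin (n - k) → Fin dY, M (glue hk w u) (glue hk w' u)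

/-- Partial trace over the last `n - k` input (`X`) factors, keeping `A`. -/
noncomputable def trXlast {dA dX k n : ℕ} (hk : k ≤ n)
    (ρ : Matrix (Fin dA × (Fin n → Fin dX)) (Fin dA × (Fin n → Fin dX)) ℂ) :
    Matrix (Fin dA × (Fin k → Fin dX)) (Fin dA × (Fin k → Fin dX)) ℂ :=
  Matrix.of fun p q =>
    ∑ u : Fin (n - k) → Fin dX, ρ (p.1, glue hk p.2 u) (q.1, glue hk q.2 u)

/-- Partial trace of a Choi matrix on `A ⊗ X^{⊗n} ⊗ Y^{⊗n}` over the last `n - k`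
`X` factors and the last `n - k` `Y` factors. -/
noncomputable def choiReduce {dA dX dY k n : ℕ} (hk : k ≤ n)
    (ω : Matrix ((Fin dA × (Fin n → Fin dX)) × (Fin n → Fin dY))
               ((Fin dA × (Fin n → Fin dX)) × (Fin n → Fin dY)) ℂ) :
    Matrix ((Fin dA × (Fin k → Fin dX)) × (Fin k → Fin dY))
           ((Fin dA × (Fin k → Fin dX)) × (Fin k → Fin dY)) ℂ :=
  Matrix.of fun p q =>
    ∑ ux : Fin (n - k) → Fin dX, ∑ u : Fin (n - k) → Fin dY,
      ω ((p.1.1, glue hk p.1.2 ux), glue hk p.2 u)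
        ((q.1.1, glue hk q.1.2 ux), glue hk q.2 u)


/-! Entries of a Choi matrix are `(dim)⁻¹ • Q (E_{ij})`. Tracing out the last `Y` factors and
using non-signalling turns `Q (E_{ij})` into `Q_k (tr_X E_{ij})`, and the partial trace of a
matrix unit is a matrix unit when the traced-out `X` indices agree and `0` otherwise. Summing the
diagonal over those `d_X^{n-k}` indices gives `ω_k`, with normalisation `(d_A d_X^k)⁻¹`. -/

theorem glue_injective {α : Type*} {k n : ℕ} (hk : k ≤ n) :
    Function.Injective fun p : (Fin k → α) × (Fin (n - k) → α) => glue hk p.1 p.2 :=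
  (finCongr (by omega)).surjective.injective_comp_right.comp
    (Fin.appendEquiv k (n - k)).injective

theorem glue_inj {α : Type*} {k n : ℕ} (hk : k ≤ n) {v v' : Fin k → α}
    {u u' : Fin (n - k) → α} : glue hk v u = glue hk v' u' ↔ v = v' ∧ u = u' :=
  (glue_injective hk).eq_iff.trans Prod.mk_inj

theorem trXlast_single {dA dX k n : ℕ} (hk : k ≤ n) (a a' : Fin dA)
    (v v' : Fin k → Fin dX) (u u' : Fin (n - k) → Fin dX) (c : ℂ) :
    trXlast hk (Matrix.single (a, glue hk v u) (a', glue hk v' u') c)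
      = if u = u' then Matrix.single (a, v) (a', v') c else 0 := by
  ext p q
  simp only [trXlast, Matrix.of_apply, Matrix.single_apply, Prod.mk.injEq, glue_inj]
  split_ifs with hu
  · subst hu
    rw [Finset.sum_eq_single u (fun w _ hw => if_neg fun h => hw h.1.2.2.symm) (by simp)]
    simp [Matrix.single_apply, Prod.ext_iff, and_assoc]
  · exact Finset.sum_eq_zero fun w _ => if_neg fun h => hu (h.1.2.2.trans h.2.2.2.symm)

section NonSignalling

variable {dA dX dY k n : ℕ} {hk : k ≤ n}
  {Q : Matrix (Fin dA × (Fin n → Fin dX)) (Fin dA × (Fin n → Fin dX)) ℂ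
    →ₗ[ℂ] Matrix (Fin n → Fin dY) (Fin n → Fin dY) ℂ}
  {Qk : Matrix (Fin dA × (Fin k → Fin dX)) (Fin dA × (Fin k → Fin dX)) ℂ
    →ₗ[ℂ] Matrix (Fin k → Fin dY) (Fin k → Fin dY) ℂ}

theorem sum_choi_glue (hQk : ∀ ρ, trYlast hk (Q ρ) = Qk (trXlast hk ρ))
    (a a' : Fin dA) (v v' : Fin k → Fin dX) (ux ux' : Fin (n - k) → Fin dX)
    (w w' : Fin k → Fin dY) :
    ∑ u, choi Q ((a, glue hk v ux), glue hk w u) ((a', glue hk v' ux'), glue hk w' u)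
      = if ux = ux' then
          (Fintype.card (Fin dA × (Fin n → Fin dX)) : ℂ)⁻¹ *
            Qk (Matrix.single (a, v) (a', v') 1) w w'
        else 0 :=
  calc _ = (Fintype.card (Fin dA × (Fin n → Fin dX)) : ℂ)⁻¹ *
        trYlast hk (Q (Matrix.single (a, glue hk v ux) (a', glue hk v' ux') 1)) w w' :=
      (Finset.mul_sum _ _ _).symm
    _ = _ := by
      rw [hQk, trXlast_single]
      split_ifs <;> simp

theorem choiReduce_choi_apply (hQk : ∀ ρ, trYlast hk (Q ρ) = Qk (trXlast hk ρ))
    (a a' : Fin dA) (v v' : Fin k → Fin dX) (w w' : Fin k → Fin dY) :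
    choiReduce hk (choi Q) ((a, v), w) ((a', v'), w')
      = (dX : ℂ) ^ (n - k) * (Fintype.card (Fin dA × (Fin n → Fin dX)) : ℂ)⁻¹ *
          Qk (Matrix.single (a, v) (a', v') 1) w w' := by
  simp only [choiReduce, Matrix.of_apply, sum_choi_glue hQk, if_pos, Finset.sum_const,
    Finset.card_univ, Fintype.card_fun, Fintype.card_fin, nsmul_eq_mul]
  push_cast
  ring

theorem sum_choi_glue_eq_choiReduce (hQk : ∀ ρ, trYlast hk (Q ρ) = Qk (trXlast hk ρ))
    (a a' : Fin dA) (v v' : Fin k → Fin dX) (ux ux' : Fin (n - k) → Fin dX)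
    (w w' : Fin k → Fin dY) :
    ∑ u, choi Q ((a, glue hk v ux), glue hk w u) ((a', glue hk v' ux'), glue hk w' u)
      = (if ux = ux' then ((dX : ℂ) ^ (n - k))⁻¹ else 0)
          * choiReduce hk (choi Q) ((a, v), w) ((a', v'), w') := by
  have hdX : (dX : ℂ) ^ (n - k) ≠ 0 := by
    have : Nonempty (Fin (n - k) → Fin dX) := ⟨ux⟩
    simpa using Fintype.card_ne_zero (α := Fin (n - k) → Fin dX)
  rw [sum_choi_glue hQk, choiReduce_choi_apply hQk]
  split_ifs
  · field_simp
  · simp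

theorem choiReduce_choi (hdX : dX ≠ 0) (hQk : ∀ ρ, trYlast hk (Q ρ) = Qk (trXlast hk ρ)) :
    choiReduce hk (choi Q) = choi Qk := by
  ext ⟨⟨a, v⟩, w⟩ ⟨⟨a', v'⟩, w'⟩
  have hsplit : (dX : ℂ) ^ n = (dX : ℂ) ^ k * (dX : ℂ) ^ (n - k) := by
    rw [← pow_add, Nat.add_sub_cancel' hk]
  rw [choiReduce_choi_apply hQk]
  simp only [choi, Matrix.of_apply, Fintype.card_prod, Fintype.card_fun, Fintype.card_fin]
  push_cast
  rw [hsplit]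
  field_simp

end NonSignalling

theorem choi_of_nonsignalling_channel_general
    (dA dX dY n : ℕ) (hdX : 1 ≤ dX)
    (Q : Matrix (Fin dA × (Fin n → Fin dX)) (Fin dA × (Fin n → Fin dX)) ℂ
          →ₗ[ℂ] Matrix (Fin n → Fin dY) (Fin n → Fin dY) ℂ)
    (hNS : ∀ k (hk : k ≤ n),
      ∃ Qk : Matrix (Fin dA × (Fin k → Fin dX)) (Fin dA × (Fin k → Fin dX)) ℂ
              →ₗ[ℂ] Matrix (Fin k → Fin dY) (Fin k → Fin dY) ℂ,
        ∀ ρ, trYlast hk (Q ρ) = Qk (trXlast hk ρ)) :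
    ∀ k (hk : k ≤ n),
      (∀ (a a' : Fin dA) (vk vk' : Fin k → Fin dX) (ux ux' : Fin (n - k) → Fin dX)
          (w w' : Fin k → Fin dY),
        (∑ u : Fin (n - k) → Fin dY,
            choi Q ((a, glue hk vk ux), glue hk w u) ((a', glue hk vk' ux'), glue hk w' u))
          = (if ux = ux' then ((dX : ℂ) ^ (n - k))⁻¹ else 0)
              * choiReduce hk (choi Q) ((a, vk), w) ((a', vk'), w')) ∧
      ∀ (Qk : Matrix (Fin dA × (Fin k → Fin dX)) (Fin dA × (Fin k → Fin dX)) ℂ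
              →ₗ[ℂ] Matrix (Fin k → Fin dY) (Fin k → Fin dY) ℂ),
        (∀ ρ, trYlast hk (Q ρ) = Qk (trXlast hk ρ)) →
        choiReduce hk (choi Q) = choi Qk := by
  intro k hk
  obtain ⟨Qk, hQk⟩ := hNS k hk
  exact ⟨sum_choi_glue_eq_choiReduce hQk,
    fun _ hQk' => choiReduce_choi (Nat.one_le_iff_ne_zero.mp hdX) hQk'⟩

/-- **Reduced Choi matrices of a non-signalling channel.**  If `Q` is a non-signalling
CPTP map, then the partial trace of its Choi matrix `ω` over the last `n - k` `Y`
factors equals `ω_k ⊗ I/d_X^{n-k}` (entrywise), and `ω_k` is the Choi matrix of the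
induced channel `Q_k`. -/
theorem choi_of_nonsignalling_channel
    (dA dX dY n : ℕ) (hdA : 1 ≤ dA) (hdX : 1 ≤ dX) (hdY : 1 ≤ dY) (hn : 1 ≤ n)
    (Q : Matrix (Fin dA × (Fin n → Fin dX)) (Fin dA × (Fin n → Fin dX)) ℂ
          →ₗ[ℂ] Matrix (Fin n → Fin dY) (Fin n → Fin dY) ℂ)
    (hCP : IsCompletelyPositive Q) (hTP : IsTracePreserving Q)
    (hNS : ∀ k (hk : k ≤ n),
      ∃ Qk : Matrix (Fin dA × (Fin k → Fin dX)) (Fin dA × (Fin k → Fin dX)) ℂ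
              →ₗ[ℂ] Matrix (Fin k → Fin dY) (Fin k → Fin dY) ℂ,
        ∀ ρ, trYlast hk (Q ρ) = Qk (trXlast hk ρ)) :
    ∀ k (hk : k ≤ n),
      (∀ (a a' : Fin dA) (vk vk' : Fin k → Fin dX) (ux ux' : Fin (n - k) → Fin dX)
          (w w' : Fin k → Fin dY),
        (∑ u : Fin (n - k) → Fin dY,
            choi Q ((a, glue hk vk ux), glue hk w u) ((a', glue hk vk' ux'), glue hk w' u))
          = (if ux = ux' then ((dX : ℂ) ^ (n - k))⁻¹ else 0)
              * choiReduce hk (choi Q) ((a, vk), w) ((a', vk'), w')) ∧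
      ∀ (Qk : Matrix (Fin dA × (Fin k → Fin dX)) (Fin dA × (Fin k → Fin dX)) ℂ
              →ₗ[ℂ] Matrix (Fin k → Fin dY) (Fin k → Fin dY) ℂ),
        (∀ ρ, trYlast hk (Q ρ) = Qk (trXlast hk ρ)) →
        choiReduce hk (choi Q) = choi Qk :=
  choi_of_nonsignalling_channel_general dA dX dY n hdX Q hNS
end

section
/- Operator Chebyshev inequality: Let (Ω, 𝔽, ℙ) be a probability space and X : Ω → {Hermitian d × d complex matrices} a Bochner-integrable random matrix such that X ⊗ X is also Bochner-integrable, with mean μ = 𝔼[X]. Then for every ε > 0: ℙ( ‖X − μ‖∞ ≥ ε ) ≤ (d²/ε²) · ‖𝔼[X ⊗ X] − μ ⊗ μ‖∞. -/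
/-! Since `‖A‖∞ ≤ ‖A‖_F`, Markov's inequality for `‖X - μ‖_F²` reduces the claim to bounding
the mean of `‖X - μ‖_F² = ∑ |Yᵢⱼ|²`, where `Y = X - μ`. As `Y` is Hermitian, `|Yᵢⱼ|² = Yᵢⱼ Yⱼᵢ`,
and `𝔼[Yᵢⱼ Yⱼᵢ]` is the `((i, j), (j, i))` entry of `𝔼[X ⊗ X] - μ ⊗ μ`, hence at most its operator
norm; summing over the `d²` entries gives the bound. -/

open MeasureTheory
open scoped ComplexOrder

/-- Operator norm (largest singular value) of a complex matrix. -/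
noncomputable def opNorm {m n : Type*} [Fintype m] [Fintype n] [DecidableEq n]
    (M : Matrix m n ℂ) : ℝ :=
  ‖LinearMap.toContinuousLinearMap (Matrix.toEuclideanLin M)‖

open Matrix

section OpNorm

variable {m n : Type*} [Fintype m] [Fintype n] [DecidableEq n]

lemma norm_apply_le_opNorm (A : Matrix m n ℂ) (i : m) (j : n) : ‖A i j‖ ≤ opNorm A := by
  have h := (toEuclideanLin A).toContinuousLinearMap.le_opNorm (EuclideanSpace.single j 1)
  rw [PiLp.norm_single, norm_one, mul_one] at h
  refine le_trans (le_of_eq ?_) ((PiLp.norm_apply_le _ i).trans h)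
  simp [EuclideanSpace.single, mulVec_single]

section
attribute [local instance] frobeniusNormedAddCommGroup

lemma opNorm_le_sqrt_sum_norm_sq (A : Matrix m n ℂ) :
    opNorm A ≤ √(∑ i, ∑ j, ‖A i j‖ ^ 2) := by
  have hA : ‖A‖ = √(∑ i, ∑ j, ‖A i j‖ ^ 2) := by
    rw [frobenius_norm_def, Real.sqrt_eq_rpow]
    norm_cast
  refine ContinuousLinearMap.opNorm_le_bound _ (Real.sqrt_nonneg _) fun x => ?_
  rw [← hA, ← frobenius_norm_replicateCol (ι := Unit), ← frobenius_norm_replicateCol (ι := Unit)]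
  calc _ = ‖A * replicateCol Unit x.ofLp‖ := by
        simp [replicateCol_mulVec]
    _ ≤ ‖A‖ * ‖replicateCol Unit x.ofLp‖ := frobenius_norm_mul _ _

end

end OpNorm

lemma Matrix.IsHermitian.norm_apply_sq {n 𝕜 : Type*} [RCLike 𝕜] {A : Matrix n n 𝕜}
    (hA : A.IsHermitian) (i j : n) : ‖A i j‖ ^ 2 = RCLike.re (A i j * A j i) := by
  rw [← hA.apply j i, RCLike.star_def, RCLike.mul_conj]
  norm_cast

section Probability

variable {Ω 𝕜 : Type*} [MeasurableSpace Ω] {P : Measure Ω} [RCLike 𝕜]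

lemma meas_ge_le_ofReal_integral_div {f : Ω → ℝ} (hf_nonneg : 0 ≤ f) (hf : Integrable f P)
    {c : ℝ} (hc : 0 < c) : P {ω | c ≤ f ω} ≤ ENNReal.ofReal ((∫ ω, f ω ∂P) / c) := by
  calc P {ω | c ≤ f ω} ≤ P {ω | ENNReal.ofReal c ≤ ENNReal.ofReal (f ω)} :=
        measure_mono fun ω hω => ENNReal.ofReal_le_ofReal hω
    _ ≤ (∫⁻ ω, ENNReal.ofReal (f ω) ∂P) / ENNReal.ofReal c :=
        meas_ge_le_lintegral_div hf.aemeasurable.ennreal_ofReal (by simpa using hc) (by simp)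
    _ = ENNReal.ofReal ((∫ ω, f ω ∂P) / c) := by
        rw [← ofReal_integral_eq_lintegral_ofReal hf (.of_forall hf_nonneg),
          ENNReal.ofReal_div_of_pos hc]

lemma integrable_sub_const_mul_sub_const [IsFiniteMeasure P] {f g : Ω → 𝕜}
    (hf : Integrable f P) (hg : Integrable g P) (hfg : Integrable (fun ω => f ω * g ω) P)
    (a b : 𝕜) : Integrable (fun ω => (f ω - a) * (g ω - b)) P := by
  have hexp : (fun ω => (f ω - a) * (g ω - b))
      = fun ω => f ω * g ω - f ω * b - a * g ω + a * b := by
    funext ω; ring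
  rw [hexp]
  exact ((hfg.sub (hf.mul_const b)).sub (hg.const_mul a)).add (integrable_const _)

lemma integral_sub_integral_mul_sub_integral [IsProbabilityMeasure P] {f g : Ω → 𝕜}
    (hf : Integrable f P) (hg : Integrable g P) (hfg : Integrable (fun ω => f ω * g ω) P) :
    ∫ ω, (f ω - ∫ ω', f ω' ∂P) * (g ω - ∫ ω', g ω' ∂P) ∂P
      = ∫ ω, f ω * g ω ∂P - (∫ ω, f ω ∂P) * ∫ ω, g ω ∂P := by
  set a := ∫ ω, f ω ∂P
  set b := ∫ ω, g ω ∂P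
  have h₁ : Integrable (fun ω => f ω * g ω - f ω * b) P := hfg.sub (hf.mul_const b)
  have h₂ : Integrable (fun ω => f ω * g ω - f ω * b - a * g ω) P := h₁.sub (hg.const_mul a)
  have hexp : (fun ω => (f ω - a) * (g ω - b))
      = fun ω => f ω * g ω - f ω * b - a * g ω + a * b := by
    funext ω; ring
  rw [hexp, integral_add h₂ (integrable_const _), integral_sub h₁ (hg.const_mul a),
    integral_sub hfg (hf.mul_const b), integral_mul_const, integral_const_mul, integral_const,
    probReal_univ, one_smul]
  ring

lemma isHermitian_of_integral {n : Type*} {X : Ω → Matrix n n 𝕜} (hX : ∀ ω, (X ω).IsHermitian) :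
    (Matrix.of fun i j => ∫ ω, X ω i j ∂P).IsHermitian := by
  refine IsHermitian.ext fun i j => ?_
  rw [of_apply, of_apply, RCLike.star_def, ← integral_conj]
  exact integral_congr_ae (.of_forall fun ω => (hX ω).apply i j)

lemma meas_le_opNorm_le_of_integral_norm_sq_le {m n : Type*} [Fintype m] [Fintype n]
    [DecidableEq n] {Y : Ω → Matrix m n ℂ} (hY : ∀ i j, Integrable (fun ω => ‖Y ω i j‖ ^ 2) P)
    {C : ℝ} (hC : ∀ i j, ∫ ω, ‖Y ω i j‖ ^ 2 ∂P ≤ C) {ε : ℝ} (hε : 0 < ε) :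
    P {ω | ε ≤ opNorm (Y ω)}
      ≤ ENNReal.ofReal (Fintype.card m * Fintype.card n / ε ^ 2 * C) := by
  have hsum : Integrable (fun ω => ∑ i, ∑ j, ‖Y ω i j‖ ^ 2) P :=
    integrable_finsetSum _ fun i _ => integrable_finsetSum _ fun j _ => hY i j
  have hsum_le : ∫ ω, ∑ i, ∑ j, ‖Y ω i j‖ ^ 2 ∂P ≤ Fintype.card m * Fintype.card n * C := by
    rw [integral_finsetSum _ fun i _ => integrable_finsetSum _ fun j _ => hY i j]
    calc ∑ i, ∫ ω, ∑ j, ‖Y ω i j‖ ^ 2 ∂P = ∑ i, ∑ j, ∫ ω, ‖Y ω i j‖ ^ 2 ∂P :=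
          Finset.sum_congr rfl fun i _ => integral_finsetSum _ fun j _ => hY i j
      _ ≤ ∑ _i : m, ∑ _j : n, C := by gcongr with i _ j _; exact hC i j
      _ = Fintype.card m * Fintype.card n * C := by simp [mul_assoc]
  have hsub : {ω | ε ≤ opNorm (Y ω)} ⊆ {ω | ε ^ 2 ≤ ∑ i, ∑ j, ‖Y ω i j‖ ^ 2} := by
    intro ω (hω : ε ≤ opNorm (Y ω))
    calc ε ^ 2 ≤ √(∑ i, ∑ j, ‖Y ω i j‖ ^ 2) ^ 2 := by
          gcongr
          exact hω.trans (opNorm_le_sqrt_sum_norm_sq _)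
      _ = _ := Real.sq_sqrt (by positivity)
  calc P {ω | ε ≤ opNorm (Y ω)}
      ≤ ENNReal.ofReal ((∫ ω, ∑ i, ∑ j, ‖Y ω i j‖ ^ 2 ∂P) / ε ^ 2) :=
        (measure_mono hsub).trans
          (meas_ge_le_ofReal_integral_div (fun ω => by positivity) hsum (by positivity))
    _ ≤ ENNReal.ofReal (Fintype.card m * Fintype.card n / ε ^ 2 * C) := by
        rw [div_mul_eq_mul_div]
        gcongr

end Probability

theorem operator_chebyshev_general
    {Ω : Type*} [MeasurableSpace Ω] (P : Measure Ω) [IsProbabilityMeasure P]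
    (d : ℕ)
    (X : Ω → Matrix (Fin d) (Fin d) ℂ)
    (hherm : ∀ ω, (X ω).IsHermitian)
    (hint : ∀ i j, Integrable (fun ω => X ω i j) P)
    (hint2 : ∀ i j k l, Integrable (fun ω => X ω i j * X ω k l) P)
    (ε : ℝ) (hε : 0 < ε) :
    P {ω | ε ≤ opNorm (X ω - Matrix.of fun i j => ∫ ω', X ω' i j ∂P)}
      ≤ ENNReal.ofReal
          (((d : ℝ) ^ 2 / ε ^ 2) *
            opNorm
              ((Matrix.of fun (p q : Fin d × Fin d) => ∫ ω', X ω' p.1 q.1 * X ω' p.2 q.2 ∂P)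
                - Matrix.of fun (p q : Fin d × Fin d) =>
                    (∫ ω', X ω' p.1 q.1 ∂P) * ∫ ω', X ω' p.2 q.2 ∂P)) := by
  set μ : Matrix (Fin d) (Fin d) ℂ := Matrix.of fun i j => ∫ ω', X ω' i j ∂P
  set M : Matrix (Fin d × Fin d) (Fin d × Fin d) ℂ :=
    (Matrix.of fun p q => ∫ ω', X ω' p.1 q.1 * X ω' p.2 q.2 ∂P)
      - Matrix.of fun p q => (∫ ω', X ω' p.1 q.1 ∂P) * ∫ ω', X ω' p.2 q.2 ∂P
  have hY (ω : Ω) : (X ω - μ).IsHermitian := (hherm ω).sub (isHermitian_of_integral hherm)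
  have hprod (i j k l : Fin d) : Integrable (fun ω => (X ω - μ) i j * (X ω - μ) k l) P :=
    integrable_sub_const_mul_sub_const (hint i j) (hint k l) (hint2 i j k l) _ _
  have hsq (i j : Fin d) : Integrable (fun ω => ‖(X ω - μ) i j‖ ^ 2) P := by
    simp_rw [(hY _).norm_apply_sq]
    exact (hprod i j j i).re
  have hmoment (i j : Fin d) : ∫ ω, ‖(X ω - μ) i j‖ ^ 2 ∂P ≤ opNorm M := by
    simp_rw [(hY _).norm_apply_sq]
    rw [integral_re (hprod i j j i)]
    calc RCLike.re (∫ ω, (X ω - μ) i j * (X ω - μ) j i ∂P) = RCLike.re (M (i, j) (j, i)) :=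
          congrArg _ (integral_sub_integral_mul_sub_integral (hint i j) (hint j i) (hint2 i j j i))
      _ ≤ ‖M (i, j) (j, i)‖ := RCLike.re_le_norm _
      _ ≤ opNorm M := norm_apply_le_opNorm _ _ _
  simpa [Fintype.card_fin, ← sq] using
    meas_le_opNorm_le_of_integral_norm_sq_le hsq hmoment hε

/-- **Operator Chebyshev inequality**: for an integrable Hermitian-matrix-valued random
variable `X` with mean `μ`, the probability that `‖X − μ‖∞ ≥ ε` is at most
`(d²/ε²) ‖𝔼[X ⊗ X] − μ ⊗ μ‖∞`. -/
theorem operator_chebyshev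
    {Ω : Type*} [MeasurableSpace Ω] (P : Measure Ω) [IsProbabilityMeasure P]
    (d : ℕ) (hd : 1 ≤ d)
    (X : Ω → Matrix (Fin d) (Fin d) ℂ)
    (hherm : ∀ ω, (X ω).IsHermitian)
    (hmeas : ∀ i j, Measurable fun ω => X ω i j)
    (hint : ∀ i j, Integrable (fun ω => X ω i j) P)
    (hint2 : ∀ i j k l, Integrable (fun ω => X ω i j * X ω k l) P)
    (ε : ℝ) (hε : 0 < ε) :
    P {ω | ε ≤ opNorm (X ω - Matrix.of fun i j => ∫ ω', X ω' i j ∂P)}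
      ≤ ENNReal.ofReal
          (((d : ℝ) ^ 2 / ε ^ 2) *
            opNorm
              ((Matrix.of fun (p q : Fin d × Fin d) => ∫ ω', X ω' p.1 q.1 * X ω' p.2 q.2 ∂P)
                - Matrix.of fun (p q : Fin d × Fin d) =>
                    (∫ ω', X ω' p.1 q.1 ∂P) * ∫ ω', X ω' p.2 q.2 ∂P)) :=
  operator_chebyshev_general P d X hherm hint hint2 ε hε
end

section
/- For all natural numbers d ≥ 1, n ≥ 1, and 0 ≤ k ≤ n, the ratio of binomial coefficients satisfies C(n − k + d − 1, d − 1) / C(n + d − 1, d − 1) ≥ 1 − d·k/n (as real numbers). Equivalently, the dimensions of the symmetric subspaces of (ℂ^d)^{⊗(n−k)} and (ℂ^d)^{⊗n} satisfy dim H_sym(n−k) / dim H_sym(n) ≥ 1 − dk/n. -/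
/-! With `e = d - 1`, the ratio `C(n - k + e, e) / C(n + e, e)` is the product of the `e` factors
`1 - k / (n + 1 + i)`, `i < e`. The Weierstrass product inequality `∏ (1 - aᵢ) ≥ 1 - ∑ aᵢ`
and `k / (n + 1 + i) ≤ k / n` then bound it below by `1 - e k / n ≥ 1 - d k / n`. -/

open Finset

theorem one_sub_sum_le_prod_one_sub {ι R : Type*} [CommRing R] [LinearOrder R]
    [IsStrictOrderedRing R] (s : Finset ι) {f : ι → R}
    (h0 : ∀ i ∈ s, 0 ≤ f i) (h1 : ∀ i ∈ s, f i ≤ 1) :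
    1 - ∑ i ∈ s, f i ≤ ∏ i ∈ s, (1 - f i) := by
  classical
  induction s using Finset.induction_on with
  | empty => simp
  | insert a s ha ih =>
    rw [sum_insert ha, prod_insert ha]
    have hs : 0 ≤ ∑ i ∈ s, f i := sum_nonneg fun i hi ↦ h0 i (mem_insert_of_mem hi)
    have ih := ih (fun i hi ↦ h0 i (mem_insert_of_mem hi))
      (fun i hi ↦ h1 i (mem_insert_of_mem hi))
    have ha0 := h0 a (mem_insert_self a s)
    have ha1 := h1 a (mem_insert_self a s)
    nlinarith [mul_le_mul_of_nonneg_left ih (sub_nonneg.2 ha1), mul_nonneg ha0 hs]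

theorem cast_choose_add_div_cast_choose_add {K : Type*} [Field K] [CharZero K] (m n e : ℕ) :
    ((m + e).choose e : K) / (n + e).choose e =
      ∏ i ∈ range e, ((m + 1 + i : K) / (n + 1 + i)) := by
  have hfact : (e.factorial : K) ≠ 0 := Nat.cast_ne_zero.2 e.factorial_ne_zero
  have hasc (a : ℕ) : ((a + e).choose e : K) = (a + 1).ascFactorial e / e.factorial := by
    rw [Nat.ascFactorial_eq_factorial_mul_choose, Nat.cast_mul, mul_div_cancel_left₀ _ hfact]
  rw [hasc, hasc, div_div_div_cancel_right₀ hfact, Nat.ascFactorial_eq_prod_range,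
    Nat.ascFactorial_eq_prod_range, prod_div_distrib]
  push_cast
  rfl

/-- the ratio of symmetric-subspace dimensions satisfies
`dim H_sym(n−k) / dim H_sym(n) = C(n−k+d−1, d−1) / C(n+d−1, d−1) ≥ 1 − dk/n`. -/
theorem symmetric_subspace_dimension_ratio
    (d n k : ℕ) (hd : 1 ≤ d) (hn : 1 ≤ n) (hk : k ≤ n) :
    (1 : ℝ) - (d : ℝ) * k / n
      ≤ (Nat.choose (n - k + d - 1) (d - 1) : ℝ) / (Nat.choose (n + d - 1) (d - 1) : ℝ) := by
  obtain ⟨e, rfl⟩ : ∃ e, d = e + 1 := ⟨d - 1, by omega⟩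
  simp only [Nat.add_sub_cancel, ← add_assoc]
  rw [cast_choose_add_div_cast_choose_add]
  have hn' : (0 : ℝ) < n := by exact_mod_cast hn
  have hk' : (k : ℝ) ≤ n := by exact_mod_cast hk
  have hfactor : ∀ i ∈ range e,
      (((n - k : ℕ) : ℝ) + 1 + i) / (n + 1 + i) = 1 - k / (n + 1 + i) := by
    intro i _
    rw [Nat.cast_sub hk]
    field_simp
    ring
  rw [prod_congr rfl hfactor]
  calc (1 : ℝ) - (e + 1 : ℕ) * k / n ≤ 1 - ∑ i ∈ range e, (k : ℝ) / n := by
        rw [sum_const, card_range, nsmul_eq_mul, mul_div_assoc]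
        push_cast
        nlinarith [div_nonneg (Nat.cast_nonneg k) hn'.le]
    _ ≤ 1 - ∑ i ∈ range e, (k : ℝ) / (n + 1 + i) := by
        gcongr with i
        linarith
    _ ≤ _ := by
        refine one_sub_sum_le_prod_one_sub _ (fun i _ ↦ by positivity) fun i _ ↦ ?_
        rw [div_le_one (by positivity)]
        linarith [(i.cast_nonneg : (0 : ℝ) ≤ i)]
end
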